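/- arXiv:1802.03649 — 4 statements merged into one kernel-verified Lean document; each statement's English description precedes it below -/
import Mathlib

section
/- (Full probabilistic detection guarantee, part (ii) of the main theorem.) There exists an absolute constant C > 0 with the following property. Let n, r ≥ 1, R ∈ ℝ^{r×n}, x ∈ ℝ^n, Δ ≥ 0, and ε, δ ∈ (0,1). Suppose that for every c ∈ ℝ^r, at least εn coordinates are violated: |{i ∈ {1,…,n} : |x_i − (cR)_i| > Δ}| ≥ εn. Let d := (r+2)·log(r+2). If i₁, …, i_s are sampled independently and uniformly at random from {1,…,n} with s ≥ C·((1/ε)·log(1/δ) + (d/ε)·log(d/ε)), and S = {i₁,…,i_s}, then with probability at least 1 − δ the sampled system on S is infeasible, i.e., the randomized test detects that x lies outside the subspace. -/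
/-!
If the sampled system is feasible, its feasible region, an intersection of closed slabs in `ℝ^r`,
has a unique point of least norm, and by Helly's theorem this point is already the least-norm
point of the intersection of at most `r + 1` of the sampled slabs. Hence a feasible sample has a
set `B` of at most `r + 1` positions such that every other sample lands among the coordinates
satisfied by the point that the samples in `B` determine; by hypothesis that point satisfies at
most a `(1 - ε)` fraction of the coordinates. A union bound over the at most `(r + 2) s^(r+1)`
choices of `B` bounds the probability of feasibility by `(r + 2) s^(r+1) (1 - ε)^(s - r - 1)`,
which is at most `δ` once `s ≥ 100 ((1/ε) log(1/δ) + (d/ε) log(d/ε))`.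
-/

open scoped Classical

open Finset Module Real

section MinNormPoint

variable {E : Type*} [NormedAddCommGroup E]

/-- If `K` has no point of least norm, this is an arbitrary point. -/
noncomputable def minNormPoint (K : Set E) : E :=
  Classical.epsilon fun p => p ∈ K ∧ IsMinOn norm K p

theorem minNormPoint_spec {K : Set E} (h : ∃ p ∈ K, IsMinOn norm K p) :
    minNormPoint K ∈ K ∧ IsMinOn norm K (minNormPoint K) :=
  Classical.epsilon_spec h

theorem IsClosed.exists_isMinOn_norm [ProperSpace E] {K : Set E} (hK : IsClosed K)
    (hne : K.Nonempty) : ∃ p ∈ K, IsMinOn norm K p := by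
  obtain ⟨p, hp, hdist⟩ := hK.exists_infDist_eq_dist hne 0
  refine ⟨p, hp, isMinOn_iff.2 fun q hq => ?_⟩
  simpa [hdist] using Metric.infDist_le_dist_of_mem (x := 0) hq

theorem IsClosed.minNormPoint_spec [ProperSpace E] {K : Set E} (hK : IsClosed K)
    (hne : K.Nonempty) : minNormPoint K ∈ K ∧ IsMinOn norm K (minNormPoint K) :=
  _root_.minNormPoint_spec (hK.exists_isMinOn_norm hne)

variable [NormedSpace ℝ E] [StrictConvexSpace ℝ E]

theorem Convex.eq_of_isMinOn_norm {K : Set E} (hK : Convex ℝ K) {p q : E} (hp : p ∈ K)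
    (hq : q ∈ K) (hpm : IsMinOn norm K p) (hqm : IsMinOn norm K q) : p = q := by
  by_contra hne
  have hmid := hK hp hq one_half_pos.le one_half_pos.le (add_halves 1)
  exact (hpm hmid).not_gt
    (norm_combo_lt_of_ne le_rfl (hqm hp) hne one_half_pos one_half_pos (add_halves 1))

theorem Convex.minNormPoint_eq {K : Set E} (hK : Convex ℝ K) {p : E} (hp : p ∈ K)
    (hpm : IsMinOn norm K p) : minNormPoint K = p :=
  have h := minNormPoint_spec ⟨p, hp, hpm⟩
  hK.eq_of_isMinOn_norm h.1 hp h.2 hpm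

theorem norm_minNormPoint_lt_of_subset [ProperSpace E] {K L : Set E} (hK : IsClosed K)
    (hKne : K.Nonempty) (hL : IsClosed L) (hLconv : Convex ℝ L) (hKL : K ⊆ L)
    (hne : minNormPoint L ≠ minNormPoint K) : ‖minNormPoint L‖ < ‖minNormPoint K‖ := by
  obtain ⟨hpK, -⟩ := hK.minNormPoint_spec hKne
  obtain ⟨-, hqmin⟩ := hL.minNormPoint_spec ⟨_, hKL hpK⟩
  refine (hqmin (hKL hpK)).lt_of_ne fun heq => hne (hLconv.minNormPoint_eq (hKL hpK) ?_)
  exact isMinOn_iff.2 fun w hw => heq ▸ hqmin hw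

end MinNormPoint

section Helly

variable {ι E : Type*} [NormedAddCommGroup E] [NormedSpace ℝ E] [FiniteDimensional ℝ E]

theorem card_le_finrank_add_one_of_forall_erase_nonempty {K : ι → Set E}
    (hK : ∀ i, Convex ℝ (K i)) {A : Finset ι} (hA : ⋂ i ∈ A, K i = ∅)
    (herase : ∀ j ∈ A, (⋂ i ∈ A.erase j, K i).Nonempty) : #A ≤ finrank ℝ E + 1 := by
  by_contra! hcard
  refine (Convex.helly_theorem' (fun i _ => hK i) fun I hIA hI => ?_).ne_empty hA
  obtain ⟨j, hjA, hjI⟩ := exists_of_ssubset (hIA.ssubset_of_ne (by rintro rfl; omega))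
  exact (herase j hjA).mono <| Set.biInter_mono
    (fun i hi => mem_erase.2 ⟨by rintro rfl; exact hjI hi, hIA hi⟩) fun _ _ => le_rfl

theorem exists_card_le_minNormPoint_biInter_eq [StrictConvexSpace ℝ E] {K : ι → Set E}
    (hconv : ∀ i, Convex ℝ (K i)) (hclosed : ∀ i, IsClosed (K i)) (A : Finset ι)
    (hne : (⋂ i ∈ A, K i).Nonempty) :
    ∃ B ⊆ A, #B ≤ finrank ℝ E + 1 ∧
      minNormPoint (⋂ i ∈ B, K i) = minNormPoint (⋂ i ∈ A, K i) := by
  induction A using Finset.strongInduction with | _ A ih =>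
  have hclosed' (B : Finset ι) : IsClosed (⋂ i ∈ B, K i) :=
    isClosed_biInter fun i _ => hclosed i
  have hsub (j : ι) : ⋂ i ∈ A, K i ⊆ ⋂ i ∈ A.erase j, K i :=
    Set.biInter_mono (fun _ => mem_of_mem_erase) fun _ _ => le_rfl
  by_cases h : ∃ j ∈ A, minNormPoint (⋂ i ∈ A.erase j, K i) = minNormPoint (⋂ i ∈ A, K i)
  · obtain ⟨j, hj, heq⟩ := h
    obtain ⟨B, hBA, hB, hBeq⟩ := ih _ (erase_ssubset hj) (hne.mono (hsub j))
    exact ⟨B, hBA.trans (erase_subset j A), hB, hBeq.trans heq⟩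
  push Not at h
  refine ⟨A, subset_rfl, ?_, rfl⟩
  rcases A.eq_empty_or_nonempty with rfl | ⟨i₀, hi₀⟩
  · simp
  -- No point of `⋂ A` is shorter than its minimal point, but each `⋂ (A.erase j)` has one.
  set p := minNormPoint (⋂ i ∈ A, K i)
  have hp := (hclosed' A).minNormPoint_spec hne
  refine card_le_finrank_add_one_of_forall_erase_nonempty
    (K := fun i => K i ∩ Metric.ball 0 ‖p‖) (fun i => (hconv i).inter (convex_ball 0 _)) ?_
    fun j hj => ?_
  · refine Set.eq_empty_of_forall_notMem fun q hq => ?_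
    simp only [Set.mem_iInter₂, Set.mem_inter_iff, mem_ball_zero_iff] at hq
    exact (hp.2 (Set.mem_iInter₂.2 fun i hi => (hq i hi).1)).not_gt (hq i₀ hi₀).2
  · have hlt := norm_minNormPoint_lt_of_subset (hclosed' A) hne (hclosed' _)
      (convex_iInter₂ fun i _ => hconv i) (hsub j) (h j hj)
    have hmem := ((hclosed' _).minNormPoint_spec (hne.mono (hsub j))).1
    refine ⟨_, Set.mem_iInter₂.2 fun i hi => ⟨Set.mem_iInter₂.1 hmem i hi, ?_⟩⟩
    simpa using hlt

end Helly

section Counting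

variable {ι α : Type*} [Fintype ι] [Fintype α]

theorem cast_card_filter_not (p : α → Prop) [DecidablePred p] :
    (#{a | ¬ p a} : ℝ) = Fintype.card α - #{a | p a} := by
  rw [eq_sub_iff_add_eq', ← Nat.cast_add, card_filter_add_card_filter_not, card_univ]

theorem card_filter_forall_notMem_mem_le (T : Finset ι) (G : (T → α) → Finset α) {q : ℝ}
    (hG : ∀ f, (#(G f) : ℝ) ≤ q * Fintype.card α) :
    (#{ω : ι → α | ∀ j ∉ T, ω j ∈ G fun j : T => ω j} : ℝ) ≤
      q ^ (Fintype.card ι - #T) * Fintype.card α ^ Fintype.card ι := by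
  set S := ({ω : ι → α | ∀ j ∉ T, ω j ∈ G fun j : T => ω j} : Finset (ι → α))
  have hcompl : Fintype.card {j // j ∉ T} = Fintype.card ι - #T := by
    rw [Fintype.card_subtype_compl, Fintype.card_coe]
  have hfiber (f : T → α) :
      #{ω ∈ S | (fun j : T => ω j) = f} ≤ #(G f) ^ (Fintype.card ι - #T) := by
    have hpi : #(Fintype.piFinset fun _ : {j // j ∉ T} => G f) =
        #(G f) ^ (Fintype.card ι - #T) := by
      rw [Fintype.card_piFinset, prod_const, card_univ, hcompl]
    rw [← hpi]
    refine card_le_card_of_injOn (fun ω (j : {j // j ∉ T}) => ω j) (fun ω hω => ?_) ?_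
    · simp only [coe_filter, Set.mem_ofPred_eq, S, mem_filter, mem_univ, true_and] at hω
      simpa [Fintype.mem_piFinset, ← hω.2] using fun j hj => hω.1 j hj
    · intro ω hω ω' hω' heq
      simp only [coe_filter, Set.mem_ofPred_eq, S, mem_filter, mem_univ, true_and] at hω hω'
      funext j
      by_cases hj : j ∈ T
      · exact congrFun (hω.2.trans hω'.2.symm) ⟨j, hj⟩
      · exact congrFun heq (⟨j, hj⟩ : {j // j ∉ T})
  calc (#S : ℝ) = ∑ f : T → α, (#{ω ∈ S | (fun j : T => ω j) = f} : ℝ) := by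
        exact_mod_cast card_eq_sum_card_fiberwise fun _ _ => mem_univ _
    _ ≤ ∑ _f : T → α, (q * Fintype.card α) ^ (Fintype.card ι - #T) := by
        gcongr with f
        exact (Nat.cast_le.2 (hfiber f)).trans (by push_cast; gcongr; exact hG f)
    _ = q ^ (Fintype.card ι - #T) * Fintype.card α ^ Fintype.card ι := by
        rw [sum_const, card_univ, Fintype.card_fun, Fintype.card_coe, nsmul_eq_mul, mul_pow]
        push_cast
        rw [mul_left_comm, ← pow_add, Nat.add_sub_cancel' (card_le_univ T)]

theorem card_filter_card_le_le (hι : 0 < Fintype.card ι) (k : ℕ) :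
    #{B : Finset ι | #B ≤ k} ≤ (k + 1) * Fintype.card ι ^ k := by
  calc #{B : Finset ι | #B ≤ k}
      ≤ ∑ j ∈ range (k + 1), #(powersetCard j (univ : Finset ι)) := by
        refine (card_le_card fun B hB => mem_biUnion.2 ⟨#B, ?_⟩).trans card_biUnion_le
        simp_all
    _ ≤ ∑ _j ∈ range (k + 1), Fintype.card ι ^ k := by
        gcongr with j hj
        rw [card_powersetCard, card_univ]
        exact (Nat.choose_le_pow _ _).trans
          (Nat.pow_le_pow_right hι (Nat.lt_succ_iff.1 (mem_range.1 hj)))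
    _ = (k + 1) * Fintype.card ι ^ k := by simp

end Counting

section Sampling

variable {ι α E : Type*} [Fintype ι] [Fintype α]
  [NormedAddCommGroup E] [NormedSpace ℝ E] [StrictConvexSpace ℝ E] [FiniteDimensional ℝ E]

theorem card_filter_nonempty_iInter_le {K : α → Set E} (hconv : ∀ i, Convex ℝ (K i))
    (hclosed : ∀ i, IsClosed (K i)) {q : ℝ} (hq0 : 0 ≤ q) (hq1 : q ≤ 1)
    (hK : ∀ v, (#{i | v ∈ K i} : ℝ) ≤ q * Fintype.card α) :
    (#{ω : ι → α | (⋂ j, K (ω j)).Nonempty} : ℝ) ≤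
      #{B : Finset ι | #B ≤ finrank ℝ E + 1} *
        (q ^ (Fintype.card ι - (finrank ℝ E + 1)) * Fintype.card α ^ Fintype.card ι) := by
  set 𝓑 : Finset (Finset ι) := {B | #B ≤ finrank ℝ E + 1}
  let good (B : Finset ι) (f : B → α) : Finset α := {i | minNormPoint (⋂ j, K (f j)) ∈ K i}
  have hcover : ({ω : ι → α | (⋂ j, K (ω j)).Nonempty} : Finset _) ⊆
      𝓑.biUnion fun B => {ω | ∀ j ∉ B, ω j ∈ good B fun j : B => ω j} := by
    intro ω hω
    simp only [mem_filter, mem_univ, true_and] at hω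
    have hne : (⋂ j ∈ univ, K (ω j)).Nonempty := by simpa using hω
    obtain ⟨B, -, hB, heq⟩ := exists_card_le_minNormPoint_biInter_eq (fun j => hconv (ω j))
      (fun j => hclosed (ω j)) univ hne
    have hmem : minNormPoint (⋂ j ∈ univ, K (ω j)) ∈ ⋂ j ∈ univ, K (ω j) :=
      ((isClosed_biInter fun j _ => hclosed (ω j)).minNormPoint_spec hne).1
    rw [← heq] at hmem
    simp only [mem_biUnion, mem_filter, mem_univ, true_and, 𝓑, good]
    refine ⟨B, hB, fun j _ => ?_⟩
    rw [show ⋂ j : B, K (ω j) = ⋂ j ∈ B, K (ω j) from Set.iInter_subtype (· ∈ B) _]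
    exact Set.mem_iInter₂.1 hmem j (mem_univ j)
  set N := Fintype.card ι
  calc (#{ω : ι → α | (⋂ j, K (ω j)).Nonempty} : ℝ)
      ≤ ∑ B ∈ 𝓑, (#{ω : ι → α | ∀ j ∉ B, ω j ∈ good B fun j : B => ω j} : ℝ) := by
        exact_mod_cast (card_le_card hcover).trans card_biUnion_le
    _ ≤ ∑ _B ∈ 𝓑, q ^ (N - (finrank ℝ E + 1)) * Fintype.card α ^ N := by
        refine sum_le_sum fun B hB => ?_
        refine (card_filter_forall_notMem_mem_le B (good B) fun f => hK _).trans ?_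
        have hB : #B ≤ finrank ℝ E + 1 := (mem_filter.1 hB).2
        exact mul_le_mul_of_nonneg_right (pow_le_pow_of_le_one hq0 hq1 (by omega))
          (by positivity)
    _ = _ := by rw [sum_const, nsmul_eq_mul]

end Sampling

theorem one_le_log_of_three_le {x : ℝ} (hx : 3 ≤ x) : 1 ≤ log x :=
  (le_log_iff_exp_le (by linarith)).2 (exp_one_lt_three.le.trans hx)

theorem log_le_div_of_six_mul_log_le {A t : ℝ} (hA : 3 ≤ A) (ht : 6 * A * log A ≤ t) :
    log t ≤ t / A := by
  have hlogA : 1 ≤ log A := one_le_log_of_three_le hA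
  have ht0 : 0 < t := lt_of_lt_of_le (by positivity) ht
  have hA0 : 0 < A := by linarith
  calc log t = log (t / A ^ 2) + 2 * log A := by
        rw [log_div ht0.ne' (by positivity), log_pow]; push_cast; ring
    _ ≤ t / A ^ 2 + 2 * log A := by
        linarith [log_le_sub_one_of_pos (by positivity : 0 < t / A ^ 2)]
    _ ≤ t / (3 * A) + t / (3 * A) := by
        gcongr
        · nlinarith
        · rw [le_div_iff₀ (by positivity)]; linarith
    _ = 2 / 3 * (t / A) := by ring
    _ ≤ t / A := by linarith [div_pos ht0 hA0]

theorem sample_size_bounds {k ε L t : ℝ} (hk : 3 ≤ k) (hε0 : 0 < ε) (hε1 : ε ≤ 1)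
    (hL : 0 ≤ L)
    (ht : 100 * (1 / ε * L + k * log k / ε * log (k * log k / ε)) ≤ t) :
    2 * k ≤ t ∧ k * log t + L ≤ ε * t / 2 := by
  set D := k * log k / ε
  have hlogk := one_le_log_of_three_le hk
  have hkD : k / ε ≤ D := div_le_div_of_nonneg_right (by nlinarith) hε0.le
  have hkε : k ≤ k / ε := le_div_self (by linarith) hε0 hε1
  have hlogD := one_le_log_of_three_le (by linarith : 3 ≤ D)
  have hLt : 100 * (1 / ε * L) ≤ t := by
    nlinarith [mul_nonneg (by linarith : 0 ≤ D) (by linarith : 0 ≤ log D)]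
  have hDt : 100 * (D * log D) ≤ t := by nlinarith [mul_nonneg (one_div_nonneg.2 hε0.le) hL]
  -- With `A = 4 k / ε`, the bound `log t ≤ t / A` is exactly `k * log t ≤ ε * t / 4`.
  have hA : 4 * k / ε ≤ 4 * D := by rw [mul_div_assoc]; linarith
  have hlogA : log (4 * k / ε) ≤ 3 * log D :=
    calc log (4 * k / ε) ≤ log (4 * D) := log_le_log (by positivity) hA
      _ = log 4 + log D := log_mul (by norm_num) (by positivity)
      _ ≤ log (D ^ 2) + log D := by gcongr; nlinarith
      _ = 3 * log D := by rw [log_pow]; push_cast; ring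
  have hlogt : log t ≤ t / (4 * k / ε) := by
    refine log_le_div_of_six_mul_log_le (by rw [mul_div_assoc]; linarith) ?_
    nlinarith [log_nonneg (by rw [mul_div_assoc]; linarith : 1 ≤ 4 * k / ε)]
  rw [div_div_eq_mul_div, le_div_iff₀ (by positivity)] at hlogt
  have hLε : L ≤ ε * t / 100 := by
    rw [one_div_mul_eq_div, mul_div_assoc', div_le_iff₀ hε0] at hLt
    linarith
  constructor <;> nlinarith

theorem tail_le_of_sample_size {r s : ℕ} {ε δ : ℝ} (hr : 1 ≤ r)
    (hε : ε ∈ Set.Ioo (0 : ℝ) 1) (hδ : δ ∈ Set.Ioo (0 : ℝ) 1)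
    (hs : 100 * ((1 / ε) * log (1 / δ) + (((r : ℝ) + 2) * log ((r : ℝ) + 2) / ε) *
      log (((r : ℝ) + 2) * log ((r : ℝ) + 2) / ε)) ≤ s) :
    0 < s ∧ ((r : ℝ) + 2) * (s : ℝ) ^ (r + 1) * (1 - ε) ^ (s - (r + 1)) ≤ δ := by
  have hr' : (1 : ℝ) ≤ r := by exact_mod_cast hr
  obtain ⟨h2k, hlog⟩ := sample_size_bounds (by linarith) hε.1 hε.2.le
    (log_nonneg (one_le_one_div hδ.1 hδ.2.le)) hs
  have hs0 : (0 : ℝ) < s := by linarith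
  have hrs : r + 1 ≤ s := by exact_mod_cast (by linarith : (r : ℝ) + 1 ≤ s)
  have hm : ((s - (r + 1) : ℕ) : ℝ) = s - (r + 1) := by push_cast [Nat.cast_sub hrs]; ring
  refine ⟨by exact_mod_cast hs0, ?_⟩
  calc ((r : ℝ) + 2) * (s : ℝ) ^ (r + 1) * (1 - ε) ^ (s - (r + 1))
      ≤ (s : ℝ) ^ (r + 2) * exp (-ε) ^ (s - (r + 1)) := by
        rw [pow_succ' (s : ℝ) (r + 1)]
        gcongr
        · exact pow_nonneg (by linarith [hε.2]) _
        · linarith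
        · linarith [hε.2]
        · exact one_sub_le_exp_neg ε
    _ = exp (((r : ℝ) + 2) * log s - ε * (s - (r + 1))) := by
        rw [sub_eq_add_neg, exp_add, ← hm,
          show ((r : ℝ) + 2) = ((r + 2 : ℕ) : ℝ) by push_cast; ring, exp_nat_mul, exp_log hs0,
          ← exp_nat_mul]
        ring_nf
    _ ≤ exp (-log (1 / δ)) := exp_le_exp.2 (by nlinarith [hε.1])
    _ = δ := by rw [one_div, log_inv, neg_neg, exp_log hδ.1]

theorem card_filter_exists_forall_abs_sub_le_le {n r : ℕ} (R : Matrix (Fin r) (Fin n) ℝ)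
    (x : Fin n → ℝ) (Δ : ℝ) {q : ℝ} (hq0 : 0 ≤ q) (hq1 : q ≤ 1)
    (hsat : ∀ c : Fin r → ℝ, (#{i | |x i - ∑ k, c k * R k i| ≤ Δ} : ℝ) ≤ q * n)
    (s : ℕ) :
    (#{ω : Fin s → Fin n | ∃ v : Fin r → ℝ, ∀ j, |x (ω j) - ∑ k, v k * R k (ω j)| ≤ Δ} : ℝ)
      ≤ #{B : Finset (Fin s) | #B ≤ r + 1} * (q ^ (s - (r + 1)) * n ^ s) := by
  set K : Fin n → Set (EuclideanSpace ℝ (Fin r)) :=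
    fun i => {v | |x i - ∑ k, v k * R k i| ≤ Δ}
  have hconv (i : Fin n) : Convex ℝ (K i) := by
    have hL : IsLinearMap ℝ fun v : EuclideanSpace ℝ (Fin r) => ∑ k, v k * R k i :=
      ⟨by simp [add_mul, sum_add_distrib], by simp [mul_sum, mul_assoc]⟩
    have hK : K i = (fun v => ∑ k, v k * R k i) ⁻¹' Set.Icc (x i - Δ) (x i + Δ) := by
      refine Set.ext fun v => ?_
      simp only [K, Set.mem_ofPred_eq, Set.mem_preimage, Set.mem_Icc, abs_le]
      constructor <;> rintro ⟨h₁, h₂⟩ <;> constructor <;> linarith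
    rw [hK]
    exact (convex_Icc _ _).is_linear_preimage hL
  have hclosed (i : Fin n) : IsClosed (K i) := isClosed_le (by fun_prop) continuous_const
  have h := card_filter_nonempty_iInter_le (ι := Fin s) hconv hclosed hq0 hq1
    fun v => by simpa [K] using hsat v.ofLp
  simp only [finrank_euclideanSpace_fin, Fintype.card_fin] at h
  convert h using 3
  ext ω
  simp only [mem_filter, mem_univ, true_and]
  exact ⟨fun ⟨v, hv⟩ => ⟨WithLp.toLp 2 v, Set.mem_iInter.2 hv⟩,
    fun ⟨v, hv⟩ => ⟨v.ofLp, fun j => Set.mem_iInter.1 hv j⟩⟩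

/-- Full probabilistic detection guarantee (part (ii) of the main theorem):
there is an absolute constant `C` such that if every candidate coefficient vector
violates at least `ε n` coordinates, then sampling
`s ≥ C ((1/ε) log(1/δ) + (d/ε) log(d/ε))` coordinates, with `d = (r+2) log(r+2)`,
makes the sampled system infeasible with probability at least `1 - δ`. -/
theorem randomized_detection_guarantee :
    ∃ C : ℝ, 0 < C ∧
      ∀ (n r : ℕ), 1 ≤ n → 1 ≤ r →
      ∀ (R : Matrix (Fin r) (Fin n) ℝ) (x : Fin n → ℝ) (Δ : ℝ), 0 ≤ Δ →
      ∀ ε δ : ℝ, ε ∈ Set.Ioo (0 : ℝ) 1 → δ ∈ Set.Ioo (0 : ℝ) 1 →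
      (∀ c : Fin r → ℝ, ε * n ≤
        ((Finset.univ.filter
          (fun i : Fin n => Δ < |x i - ∑ k, c k * R k i|)).card : ℝ)) →
      ∀ s : ℕ,
        C * ((1 / ε) * Real.log (1 / δ) +
              (((r : ℝ) + 2) * Real.log ((r : ℝ) + 2) / ε) *
                Real.log (((r : ℝ) + 2) * Real.log ((r : ℝ) + 2) / ε)) ≤ (s : ℝ) →
        (1 - δ : ℝ) ≤
          ((Finset.univ.filter (fun ω : Fin s → Fin n =>
            ¬ ∃ v : Fin r → ℝ, ∀ j : Fin s, |x (ω j) - ∑ k, v k * R k (ω j)| ≤ Δ)).card : ℝ)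
          / (n : ℝ) ^ s := by
  refine ⟨100, by norm_num, fun n r hn hr R x Δ _ ε δ hε hδ hviol s hs => ?_⟩
  obtain ⟨hs0, htail⟩ := tail_le_of_sample_size hr hε hδ hs
  have hsat (c : Fin r → ℝ) : (#{i | |x i - ∑ k, c k * R k i| ≤ Δ} : ℝ) ≤ (1 - ε) * n := by
    have h := cast_card_filter_not (fun i : Fin n => Δ < |x i - ∑ k, c k * R k i|)
    simp only [not_lt, Fintype.card_fin] at h
    linarith [hviol c]
  have hfeas := card_filter_exists_forall_abs_sub_le_le R x Δ (by linarith [hε.2])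
    (by linarith [hε.1]) hsat s
  have hbases : (#{B : Finset (Fin s) | #B ≤ r + 1} : ℝ) ≤ (r + 2) * s ^ (r + 1) := by
    have := card_filter_card_le_le (ι := Fin s) (by simpa using hs0) (r + 1)
    simp only [Fintype.card_fin] at this
    exact_mod_cast this
  have hns : (0 : ℝ) < n ^ s := pow_pos (by exact_mod_cast hn) s
  have h1 := mul_le_mul_of_nonneg_right hbases
    (mul_nonneg (pow_nonneg (by linarith [hε.2] : (0 : ℝ) ≤ 1 - ε) (s - (r + 1))) hns.le)
  have h2 := mul_le_mul_of_nonneg_right htail hns.le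
  rw [le_div_iff₀ hns, cast_card_filter_not]
  simp only [Fintype.card_fun, Fintype.card_fin, Nat.cast_pow]
  linarith
end

section
/- (Step 3 of the proof of the main theorem, general form.) Let F₁ and F₂ be families of subsets of a set X whose VC dimensions are at most d₁ and d₂ respectively. Then the family F₁ ∪ F₂ has VC dimension at most d₁ + d₂ + 1; that is, F₁ ∪ F₂ shatters no subset of X of cardinality d₁ + d₂ + 2. -/
/-- A family `F` of subsets of `X` shatters a finite set `A` if every subset of `A`
is cut out by some member of `F`. -/
def Shatters {X : Type*} (F : Set (Set X)) (A : Finset X) : Prop :=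
  ∀ B : Finset X, B ⊆ A → ∃ f ∈ F, (B : Set X) = (A : Set X) ∩ f

/-!
If `F₁ ∪ F₂` shatters a set `A` of size `n = d₁ + d₂ + 2`, then the traces of `F₁` and `F₂`
on `A` together contain all `2 ^ n` subsets of `A`. By the Sauer–Shelah lemma (in Pajor's form)
the trace of `Fᵢ` has at most `∑_{k ≤ dᵢ} (n choose k)` members, and by the symmetry
`(n choose k) = (n choose (n - k))` these two sums count binomial coefficients over disjoint
ranges of `k` that both miss `k = d₁ + 1`, so they add up to less than `2 ^ n`.
-/

open Finset

theorem sum_range_choose_add_sum_range_choose_lt_two_pow {n d₁ d₂ : ℕ} (h : d₁ + d₂ + 2 ≤ n) :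
    ∑ i ∈ range (d₁ + 1), n.choose i + ∑ i ∈ range (d₂ + 1), n.choose i < 2 ^ n := by
  set S := (range (d₂ + 1)).image (n - ·)
  have hS : ∑ i ∈ range (d₂ + 1), n.choose i = ∑ j ∈ S, n.choose j := by
    rw [sum_image fun i hi j hj hij => by simp only [coe_range, Set.mem_Iio] at hi hj hij; omega]
    exact sum_congr rfl fun i hi => (Nat.choose_symm (by simp only [mem_range] at hi; omega)).symm
  have hdisj : Disjoint (range (d₁ + 1)) S := by
    simp only [S, disjoint_left, mem_range, mem_image]
    omega
  rw [hS, ← sum_union hdisj, ← Nat.sum_range_choose]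
  refine sum_lt_sum_of_subset (i := d₁ + 1) ?_ ?_ ?_ (Nat.choose_pos (by omega))
    fun _ _ _ => Nat.zero_le _
  · simp only [S, subset_iff, mem_union, mem_range, mem_image]
    omega
  · simp only [mem_range]
    omega
  · simp only [S, mem_union, mem_range, mem_image]
    omega

section Trace

variable {X : Type*} {F F₁ F₂ : Set (Set X)} {A C : Finset X} {d : ℕ}

open Classical in
noncomputable def traceOn (F : Set (Set X)) (A : Finset X) : Finset (Finset X) :=
  {B ∈ A.powerset | ∃ f ∈ F, (B : Set X) = (A : Set X) ∩ f}

@[simp]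
theorem mem_traceOn {B : Finset X} :
    B ∈ traceOn F A ↔ B ⊆ A ∧ ∃ f ∈ F, (B : Set X) = (A : Set X) ∩ f := by
  classical
  simp [traceOn]

theorem Shatters.powerset_subset_traceOn (h : Shatters F A) : A.powerset ⊆ traceOn F A :=
  fun B hB => mem_traceOn.2 ⟨mem_powerset.1 hB, h B (mem_powerset.1 hB)⟩

variable [DecidableEq X]

theorem traceOn_union : traceOn (F₁ ∪ F₂) A = traceOn F₁ A ∪ traceOn F₂ A := by
  ext B
  simp only [mem_traceOn, mem_union, Set.mem_union, or_and_right, exists_or, and_or_left]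

theorem subset_of_shatters_traceOn (h : (traceOn F A).Shatters C) : C ⊆ A :=
  let ⟨_, hu, hCu⟩ := h.exists_superset
  hCu.trans (mem_traceOn.1 hu).1

theorem shatters_of_shatters_traceOn (h : (traceOn F A).Shatters C) : Shatters F C := by
  intro B hBC
  obtain ⟨u, hu, hCu⟩ := h hBC
  obtain ⟨-, f, hf, huf⟩ := mem_traceOn.1 hu
  have hCA : (C : Set X) ⊆ A := coe_subset.2 (subset_of_shatters_traceOn h)
  refine ⟨f, hf, ?_⟩
  rw [← hCu, coe_inter, huf, ← Set.inter_assoc, Set.inter_eq_left.2 hCA]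

theorem card_le_of_shatters_traceOn (hF : ∀ C : Finset X, #C = d + 1 → ¬ Shatters F C)
    (h : (traceOn F A).Shatters C) : #C ≤ d := by
  by_contra! hlt
  obtain ⟨C', hC'C, hC'⟩ := exists_subset_card_eq (show d + 1 ≤ #C by omega)
  exact hF C' hC' (shatters_of_shatters_traceOn (h.mono_right hC'C))

theorem card_traceOn_le (hF : ∀ C : Finset X, #C = d + 1 → ¬ Shatters F C) :
    #(traceOn F A) ≤ ∑ i ∈ range (d + 1), (#A).choose i := by
  simp_rw [← card_powersetCard]
  calc #(traceOn F A) ≤ #(traceOn F A).shatterer := card_le_card_shatterer _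
    _ ≤ #((range (d + 1)).biUnion (A.powersetCard ·)) := by
      refine card_le_card fun C hC => mem_biUnion.2 ⟨#C, ?_, mem_powersetCard.2 ⟨?_, rfl⟩⟩
      · exact mem_range.2 (Nat.lt_succ_of_le (card_le_of_shatters_traceOn hF (mem_shatterer.1 hC)))
      · exact subset_of_shatters_traceOn (mem_shatterer.1 hC)
    _ ≤ _ := card_biUnion_le

end Trace

/-- Step 3 of the proof of the main theorem (general form): if `F₁` and `F₂` have VC
dimensions at most `d₁` and `d₂`, then `F₁ ∪ F₂` has VC dimension at most
`d₁ + d₂ + 1`, i.e. it shatters no set of cardinality `d₁ + d₂ + 2`. -/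
theorem vc_dim_union_le {X : Type*} (F₁ F₂ : Set (Set X)) (d₁ d₂ : ℕ)
    (h₁ : ∀ A : Finset X, A.card = d₁ + 1 → ¬ Shatters F₁ A)
    (h₂ : ∀ A : Finset X, A.card = d₂ + 1 → ¬ Shatters F₂ A) :
    ∀ A : Finset X, A.card = d₁ + d₂ + 2 → ¬ Shatters (F₁ ∪ F₂) A := by
  classical
  intro A hA hshat
  have hcover : 2 ^ (d₁ + d₂ + 2) ≤ #(traceOn F₁ A) + #(traceOn F₂ A) :=
    calc 2 ^ (d₁ + d₂ + 2) = #A.powerset := by rw [card_powerset, hA]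
      _ ≤ #(traceOn (F₁ ∪ F₂) A) := card_le_card hshat.powerset_subset_traceOn
      _ ≤ #(traceOn F₁ A) + #(traceOn F₂ A) := traceOn_union (A := A) ▸ card_union_le _ _
  have hbound₁ := card_traceOn_le (A := A) h₁
  have hbound₂ := card_traceOn_le (A := A) h₂
  rw [hA] at hbound₁ hbound₂
  have hsum := sum_range_choose_add_sum_range_choose_lt_two_pow (le_refl (d₁ + d₂ + 2))
  omega
end

section
/- (Step 3 of the proof of the main theorem, specific form.) Fix a matrix R ∈ ℝ^{r×n}, a vector x ∈ ℝ^n, and Δ ∈ ℝ, and let F₁ = { {i : x_i − (cR)_i ≤ Δ} : c ∈ ℝ^r } and F₂ = { {i : (cR)_i − x_i ≤ Δ} : c ∈ ℝ^r } be families of subsets of {1,…,n}, where (cR)_i = Σ_{k=1}^r c_k R_{k i}. Then the family F₁ ∪ F₂ has VC dimension at most 2r + 3; that is, it shatters no subset of {1,…,n} of cardinality 2r + 4. -/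
open Finset in
lemma dudley {n r : ℕ} (M : Matrix (Fin r) (Fin n) ℝ) (w : Fin n → ℝ)
    (s : Finset (Fin n)) (hcard : s.card = r + 2) :
    ¬ Shatters {S : Set (Fin n) |
        ∃ c : Fin r → ℝ, S = {i : Fin n | 0 ≤ ∑ k, c k * M k i + w i}} s := by
  classical
  intro hsh
  -- enumerate `s` by `Fin (r+2)`
  let E : Fin (r + 2) ≃ {i // i ∈ s} := (s.equivFin.trans (finCongr hcard)).symm
  set e : Fin (r + 2) → Fin n := fun j => (E j : Fin n) with he_def
  have he : Function.Injective e := fun a b hab => E.injective (Subtype.ext hab)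
  have hes : ∀ j, e j ∈ s := fun j => (E j).2
  -- vectors in ℝ^{r+1}
  set v : Fin (r + 2) → (Fin (r + 1) → ℝ) :=
    fun j => Fin.snoc (fun k => M k (e j)) (w (e j)) with hv_def
  have hnli : ¬ LinearIndependent ℝ v := by
    intro hli
    have := hli.fintype_card_le_finrank
    simp [Module.finrank_pi] at this
  obtain ⟨g, hg0, j₀, hj₀⟩ := Fintype.not_linearIndependent_iff.mp hnli
  have hk : ∀ k : Fin r, ∑ j, g j * M k (e j) = 0 := by
    intro k
    have := congrFun hg0 (Fin.castSucc k)
    simpa [hv_def, Fin.snoc_castSucc, Finset.sum_apply] using this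
  have hw : ∑ j, g j * w (e j) = 0 := by
    have := congrFun hg0 (Fin.last r)
    simpa [hv_def, Fin.snoc_last, Finset.sum_apply] using this
  have key : ∀ c : Fin r → ℝ,
      ∑ j, g j * (∑ k, c k * M k (e j) + w (e j)) = 0 := by
    intro c
    have expand : ∑ j, g j * (∑ k, c k * M k (e j) + w (e j))
        = (∑ k, c k * ∑ j, g j * M k (e j)) + ∑ j, g j * w (e j) := by
      simp only [mul_add, Finset.sum_add_distrib, Finset.mul_sum]
      rw [Finset.sum_comm]
      congr 1
      exact Finset.sum_congr rfl fun k _ => Finset.sum_congr rfl fun j _ => by ring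
    rw [expand, hw, add_zero]
    exact Finset.sum_eq_zero fun k _ => by rw [hk k, mul_zero]
  set P : Finset (Fin (r + 2)) := {j | 0 < g j} with hP_def
  by_cases hneg : ∃ j, g j < 0
  · -- use B = image of positive part
    obtain ⟨j₁, hj₁⟩ := hneg
    have hB : P.image e ⊆ s := by
      intro i hi
      obtain ⟨j, _, rfl⟩ := Finset.mem_image.mp hi
      exact hes j
    obtain ⟨f, ⟨c, rfl⟩, hBf⟩ := hsh (P.image e) hB
    have hmemB : ∀ j, e j ∈ P.image e ↔ 0 < g j := by
      intro j
      constructor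
      · rintro hm
        obtain ⟨j', hj', hjj⟩ := Finset.mem_image.mp hm
        rw [he hjj] at hj'
        simpa [hP_def] using hj'
      · intro hj
        exact Finset.mem_image_of_mem e (by simpa [hP_def] using hj)
    have hpos : ∀ j, 0 < g j → 0 ≤ ∑ k, c k * M k (e j) + w (e j) := by
      intro j hj
      have : (e j : Fin n) ∈ (↑(P.image e) : Set (Fin n)) := (hmemB j).mpr hj
      rw [hBf] at this
      exact this.2
    have hneg' : ∀ j, g j < 0 → ∑ k, c k * M k (e j) + w (e j) < 0 := by
      intro j hj
      have hnotB : e j ∉ P.image e := fun hm => absurd ((hmemB j).mp hm) (by linarith)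
      by_contra hge
      push_neg at hge
      have : (e j : Fin n) ∈ (↑(P.image e) : Set (Fin n)) := by
        rw [hBf]; exact ⟨hes j, hge⟩
      exact hnotB (by exact_mod_cast this)
    have hsumpos : 0 < ∑ j, g j * (∑ k, c k * M k (e j) + w (e j)) := by
      apply Finset.sum_pos'
      · intro j _
        rcases lt_trichotomy (g j) 0 with h | h | h
        · exact le_of_lt (mul_pos_of_neg_of_neg h (hneg' j h))
        · simp [h]
        · exact mul_nonneg h.le (hpos j h)
      · exact ⟨j₁, Finset.mem_univ _, mul_pos_of_neg_of_neg hj₁ (hneg' j₁ hj₁)⟩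
    rw [key c] at hsumpos
    exact lt_irrefl 0 hsumpos
  · -- all coefficients nonnegative; use B = ∅
    push_neg at hneg
    have hj₀' : 0 < g j₀ := lt_of_le_of_ne (hneg j₀) (Ne.symm hj₀)
    obtain ⟨f, ⟨c, rfl⟩, hBf⟩ := hsh ∅ (Finset.empty_subset s)
    have hall : ∀ j, ∑ k, c k * M k (e j) + w (e j) < 0 := by
      intro j
      by_contra hge
      push_neg at hge
      have : (e j : Fin n) ∈ ((∅ : Finset (Fin n)) : Set (Fin n)) := by
        rw [hBf]; exact ⟨hes j, hge⟩
      simpa using this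
    have hsumneg : 0 < ∑ j, -(g j * (∑ k, c k * M k (e j) + w (e j))) := by
      apply Finset.sum_pos'
      · intro j _
        have := mul_nonpos_of_nonneg_of_nonpos (hneg j) (hall j).le
        linarith
      · refine ⟨j₀, Finset.mem_univ _, ?_⟩
        have := mul_neg_of_pos_of_neg hj₀' (hall j₀)
        linarith
    rw [Finset.sum_neg_distrib, key c] at hsumneg
    simp at hsumneg

open Finset in
lemma arith_choose (r : ℕ) :
    2 * ∑ k ∈ Finset.Iic (r + 1), (2 * r + 4).choose k < 2 ^ (2 * r + 4) := by
  set m := 2 * r + 4 with hm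
  have hIic : Finset.Iic (r + 1) = Finset.range (r + 2) := by
    ext k; simp [Nat.lt_succ_iff]
  have hrefl : ∑ k ∈ Finset.range (r + 2), m.choose k
      = ∑ k ∈ Finset.Ico (r + 3) (m + 1), m.choose k := by
    apply Finset.sum_nbij' (fun k => m - k) (fun k => m - k)
    · intro k hk
      simp only [Finset.mem_range] at hk
      simp only [Finset.mem_Ico]
      omega
    · intro k hk
      simp only [Finset.mem_Ico] at hk
      simp only [Finset.mem_range]
      omega
    · intro k hk; simp only [Finset.mem_range] at hk; omega
    · intro k hk; simp only [Finset.mem_Ico] at hk; omega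
    · intro k hk
      simp only [Finset.mem_range] at hk
      rw [Nat.choose_symm (by omega)]
  have hsplit : ∑ k ∈ Finset.range (r + 2), m.choose k
      + ∑ k ∈ Finset.Ico (r + 2) (m + 1), m.choose k
      = ∑ k ∈ Finset.range (m + 1), m.choose k := by
    simp only [Finset.range_eq_Ico]
    exact Finset.sum_Ico_consecutive _ (by omega) (by omega)
  have hbot : ∑ k ∈ Finset.Ico (r + 2) (m + 1), m.choose k
      = m.choose (r + 2) + ∑ k ∈ Finset.Ico (r + 3) (m + 1), m.choose k :=
    Finset.sum_eq_sum_Ico_succ_bot (by omega) _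
  have htot : ∑ k ∈ Finset.range (m + 1), m.choose k = 2 ^ m := Nat.sum_range_choose m
  have hpos : 0 < m.choose (r + 2) := Nat.choose_pos (by omega)
  rw [hIic]
  omega

/-- Step 3 of the proof of the main theorem (specific form): the union of the two
halfspace-range families `F₁` and `F₂` has VC dimension at most `2r + 3`, i.e. it
shatters no subset of `{1,…,n}` of cardinality `2r + 4`. -/
theorem halfspace_families_union_vc_dim_le
    (n r : ℕ) (hn : 1 ≤ n) (hr : 1 ≤ r)
    (R : Matrix (Fin r) (Fin n) ℝ) (x : Fin n → ℝ) (Δ : ℝ) :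
    ∀ A : Finset (Fin n), A.card = 2 * r + 4 →
      ¬ Shatters
        ({S : Set (Fin n) |
            ∃ c : Fin r → ℝ, S = {i : Fin n | x i - ∑ k, c k * R k i ≤ Δ}} ∪
         {S : Set (Fin n) |
            ∃ c : Fin r → ℝ, S = {i : Fin n | (∑ k, c k * R k i) - x i ≤ Δ}}) A := by
  classical
  intro A hA h
  set F₁ : Set (Set (Fin n)) :=
    {S : Set (Fin n) | ∃ c : Fin r → ℝ, S = {i : Fin n | x i - ∑ k, c k * R k i ≤ Δ}} with hF₁
  set F₂ : Set (Set (Fin n)) :=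
    {S : Set (Fin n) | ∃ c : Fin r → ℝ, S = {i : Fin n | (∑ k, c k * R k i) - x i ≤ Δ}} with hF₂
  -- rewrite the families in "nonnegative linear combination" form
  have hF₁' : F₁ = {S : Set (Fin n) |
      ∃ c : Fin r → ℝ, S = {i : Fin n | 0 ≤ ∑ k, c k * R k i + (Δ - x i)}} := by
    rw [hF₁]; ext S
    constructor
    · rintro ⟨c, rfl⟩
      exact ⟨c, by ext i; simp only [Set.mem_setOf_eq]; constructor <;> intro <;> linarith⟩
    · rintro ⟨c, rfl⟩
      exact ⟨c, by ext i; simp only [Set.mem_setOf_eq]; constructor <;> intro <;> linarith⟩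
  have hF₂' : F₂ = {S : Set (Fin n) |
      ∃ c : Fin r → ℝ, S = {i : Fin n | 0 ≤ ∑ k, c k * R k i + (Δ + x i)}} := by
    rw [hF₂]; ext S
    constructor
    · rintro ⟨c, rfl⟩
      refine ⟨-c, ?_⟩
      ext i
      simp only [Set.mem_setOf_eq, Pi.neg_apply, neg_mul, Finset.sum_neg_distrib]
      constructor <;> intro <;> linarith
    · rintro ⟨c, rfl⟩
      refine ⟨-c, ?_⟩
      ext i
      simp only [Set.mem_setOf_eq, Pi.neg_apply, neg_mul, Finset.sum_neg_distrib]
      constructor <;> intro <;> linarith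
  have hd₁ : ∀ s : Finset (Fin n), s.card = r + 2 → ¬ Shatters F₁ s := by
    intro s hs
    rw [hF₁']
    exact dudley R (fun i => Δ - x i) s hs
  have hd₂ : ∀ s : Finset (Fin n), s.card = r + 2 → ¬ Shatters F₂ s := by
    intro s hs
    rw [hF₂']
    exact dudley R (fun i => Δ + x i) s hs
  -- enumerate `A` by `Fin (2r+4)`
  let E : Fin (2 * r + 4) ≃ {i // i ∈ A} := (A.equivFin.trans (finCongr hA)).symm
  set e : Fin (2 * r + 4) → Fin n := fun j => (E j : Fin n) with he_def
  have he : Function.Injective e := fun a b hab => E.injective (Subtype.ext hab)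
  have heA : ∀ j, e j ∈ A := fun j => (E j).2
  -- trace families
  set 𝒜 : Set (Set (Fin n)) → Finset (Finset (Fin (2 * r + 4))) := fun F =>
    Finset.univ.filter (fun t => ∃ f ∈ F, (↑(t.image e) : Set (Fin n)) = ↑A ∩ f) with h𝒜
  -- every subset of `Fin (2r+4)` is a trace of `F₁` or of `F₂`
  have hunion : 𝒜 F₁ ∪ 𝒜 F₂ = Finset.univ := by
    apply Finset.eq_univ_of_forall
    intro t
    have htA : t.image e ⊆ A := by
      intro i hi
      obtain ⟨j, _, rfl⟩ := Finset.mem_image.mp hi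
      exact heA j
    obtain ⟨f, hf, hcut⟩ := h (t.image e) htA
    rcases hf with hf | hf
    · exact Finset.mem_union_left _ (Finset.mem_filter.mpr ⟨Finset.mem_univ _, f, hf, hcut⟩)
    · exact Finset.mem_union_right _ (Finset.mem_filter.mpr ⟨Finset.mem_univ _, f, hf, hcut⟩)
  -- VC dimension of each trace family is at most r+1
  have hvc : ∀ F : Set (Set (Fin n)),
      (∀ s : Finset (Fin n), s.card = r + 2 → ¬ Shatters F s) →
      (𝒜 F).vcDim ≤ r + 1 := by
    intro F hF
    by_contra hlt
    push_neg at hlt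
    obtain ⟨s, hsmem, hscard⟩ :=
      (Finset.le_sup_iff (by omega : (0:ℕ) < r + 2)).mp hlt
    rw [Finset.mem_shatterer] at hsmem
    obtain ⟨s', hs's, hs'card⟩ := Finset.exists_subset_card_eq hscard
    have hshat' : (𝒜 F).Shatters s' := hsmem.mono_right hs's
    refine hF (s'.image e) (by rw [Finset.card_image_of_injective _ he, hs'card]) ?_
    intro B hB
    obtain ⟨t, hts', rfl⟩ := Finset.subset_image_iff.mp hB
    obtain ⟨u, hu, hsu⟩ := hshat' hts'
    obtain ⟨-, f, hfF, hf⟩ := Finset.mem_filter.mp hu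
    refine ⟨f, hfF, ?_⟩
    have himg : (s' ∩ u).image e = s'.image e ∩ u.image e :=
      Finset.image_inter _ _ he
    have hsub : (↑(s'.image e) : Set (Fin n)) ⊆ ↑A := by
      intro i hi
      obtain ⟨j, _, rfl⟩ := Finset.mem_image.mp hi
      exact heA j
    calc (↑(t.image e) : Set (Fin n)) = ↑((s' ∩ u).image e) := by rw [hsu]
      _ = ↑(s'.image e) ∩ ↑(u.image e) := by rw [himg, Finset.coe_inter]
      _ = ↑(s'.image e) ∩ (↑A ∩ f) := by rw [hf]
      _ = ↑(s'.image e) ∩ f := by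
          rw [← Set.inter_assoc, Set.inter_eq_left.mpr hsub]
  -- Sauer–Shelah bound on each trace family
  have hsauer : ∀ F : Set (Set (Fin n)), (𝒜 F).vcDim ≤ r + 1 →
      (𝒜 F).card ≤ ∑ k ∈ Finset.Iic (r + 1), (2 * r + 4).choose k := by
    intro F hFvc
    calc (𝒜 F).card ≤ (𝒜 F).shatterer.card := Finset.card_le_card_shatterer _
      _ ≤ ∑ k ∈ Finset.Iic (𝒜 F).vcDim, (Fintype.card (Fin (2 * r + 4))).choose k :=
          Finset.card_shatterer_le_sum_vcDim
      _ ≤ ∑ k ∈ Finset.Iic (r + 1), (2 * r + 4).choose k := by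
          rw [Fintype.card_fin]
          exact Finset.sum_le_sum_of_subset (Finset.Iic_subset_Iic.mpr hFvc)
  -- counting
  have hcount : 2 ^ (2 * r + 4) ≤ (𝒜 F₁).card + (𝒜 F₂).card := by
    calc 2 ^ (2 * r + 4) = Fintype.card (Finset (Fin (2 * r + 4))) := by
          rw [Fintype.card_finset, Fintype.card_fin]
      _ = (𝒜 F₁ ∪ 𝒜 F₂).card := by rw [hunion, Finset.card_univ]
      _ ≤ (𝒜 F₁).card + (𝒜 F₂).card := Finset.card_union_le _ _
  have h1 := hsauer F₁ (hvc F₁ hd₁)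
  have h2 := hsauer F₂ (hvc F₂ hd₂)
  have := arith_choose r
  omega
end

section
/- (Monotonicity of the MACO coordinate update.) Fix L ∈ ℝ^{m×r}, R ∈ ℝ^{r×n}, and an index pair (i,k) with 1 ≤ i ≤ m, 1 ≤ k ≤ r. Let W_{ik} := μ + Σ_{j : (i,j)∈𝓔} R_{kj}² + Σ_{j : (i,j)∈𝓛} R_{kj}² + Σ_{j : (i,j)∈𝓤} R_{kj}², and assume W_{ik} > 0. Define g(t) := f(L + t·E_{ik}, R), where E_{ik} is the matrix with 1 in position (i,k) and 0 elsewhere. Then g is convex and differentiable, its derivative g′ is Lipschitz continuous with constant W_{ik}, and the update δ := −g′(0)/W_{ik} satisfies f(L + δ·E_{ik}, R) ≤ f(L, R) − g′(0)²/(2·W_{ik}); in particular the coordinate-descent update never increases the objective f. -/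
/-- The inequality-constrained matrix-completion objective
`f(L,R) = ½Σ_𝓔 (L_{i:}R_{:j} − X^𝓔)² + ½Σ_𝓛 ((X^𝓛 − L_{i:}R_{:j})₊)²
 + ½Σ_𝓤 ((L_{i:}R_{:j} − X^𝓤)₊)² + (μ/2)‖L‖_F² + (μ/2)‖R‖_F²`. -/
noncomputable def macoF (m n r : ℕ) (E Lb Ub : Finset (Fin m × Fin n))
    (XE XL XU : Fin m × Fin n → ℝ) (μ : ℝ)
    (A : Fin m → Fin r → ℝ) (B : Fin r → Fin n → ℝ) : ℝ :=
  (1 / 2) * ∑ p ∈ E, ((∑ k, A p.1 k * B k p.2) - XE p) ^ 2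
  + (1 / 2) * ∑ p ∈ Lb, (max (XL p - ∑ k, A p.1 k * B k p.2) 0) ^ 2
  + (1 / 2) * ∑ p ∈ Ub, (max ((∑ k, A p.1 k * B k p.2) - XU p) 0) ^ 2
  + (μ / 2) * ∑ i, ∑ k, (A i k) ^ 2
  + (μ / 2) * ∑ k, ∑ j, (B k j) ^ 2

/-!
Along the line `t ↦ L + t E_{ik}` every entry `(LR)_p` is affine in `t` with slope
`a_p = [p.1 = i] R_{k p.2}`. Hence `g` is a constant plus a sum of terms `½ ψ(a_p t + b_p)²`
with `ψ = id` or `ψ = (·)₊`, plus `μ (L_{ik} + t)² / 2`. Each of these has a monotone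
derivative that is `a_p²`- (resp. `μ`-) Lipschitz, so `g'` is monotone (`g` is convex) and
`W_{ik}`-Lipschitz. The decrease is the quadratic upper bound
`g s ≤ g 0 + g' 0 * s + W s² / 2`, evaluated at its minimiser `s = -g' 0 / W`.
-/

open scoped NNReal

structure HasMonotoneLipschitzDeriv (K : ℝ≥0) (f f' : ℝ → ℝ) : Prop where
  hasDerivAt : ∀ x, HasDerivAt f (f' x) x
  monotone : Monotone f'
  lipschitzWith : LipschitzWith K f'

namespace HasMonotoneLipschitzDeriv

variable {K K₁ K₂ : ℝ≥0} {f f₁ f₂ f' f₁' f₂' : ℝ → ℝ}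

theorem add (h₁ : HasMonotoneLipschitzDeriv K₁ f₁ f₁')
    (h₂ : HasMonotoneLipschitzDeriv K₂ f₂ f₂') :
    HasMonotoneLipschitzDeriv (K₁ + K₂) (fun x => f₁ x + f₂ x)
      (fun x => f₁' x + f₂' x) where
  hasDerivAt x := (h₁.hasDerivAt x).add (h₂.hasDerivAt x)
  monotone := h₁.monotone.add h₂.monotone
  lipschitzWith := h₁.lipschitzWith.add h₂.lipschitzWith

theorem sum {ι : Type*} (s : Finset ι) {K : ι → ℝ≥0} {f f' : ι → ℝ → ℝ}
    (h : ∀ p ∈ s, HasMonotoneLipschitzDeriv (K p) (f p) (f' p)) :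
    HasMonotoneLipschitzDeriv (∑ p ∈ s, K p) (fun x => ∑ p ∈ s, f p x)
      (fun x => ∑ p ∈ s, f' p x) where
  hasDerivAt x := HasDerivAt.fun_sum fun p hp => (h p hp).hasDerivAt x
  monotone _ _ hxy := Finset.sum_le_sum fun p hp => (h p hp).monotone hxy
  lipschitzWith := LipschitzWith.of_dist_le_mul fun x y => by
    push_cast
    rw [Finset.sum_mul]
    exact dist_sum_sum_le_of_le s fun p hp => (h p hp).lipschitzWith.dist_le_mul x y

theorem const_mul (h : HasMonotoneLipschitzDeriv K f f') (c : ℝ≥0) :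
    HasMonotoneLipschitzDeriv (c * K) (fun x => c * f x) (fun x => c * f' x) where
  hasDerivAt x := (h.hasDerivAt x).const_mul (c : ℝ)
  monotone := h.monotone.const_mul c.2
  lipschitzWith := LipschitzWith.of_dist_le_mul fun x y => by
    rw [Real.dist_eq, ← mul_sub, abs_mul, NNReal.abs_eq, NNReal.coe_mul, mul_assoc,
      ← Real.dist_eq]
    exact mul_le_mul_of_nonneg_left (h.lipschitzWith.dist_le_mul x y) c.2

theorem add_const (h : HasMonotoneLipschitzDeriv K f f') (C : ℝ) :
    HasMonotoneLipschitzDeriv K (fun x => f x + C) f' where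
  hasDerivAt x := (h.hasDerivAt x).add_const C
  monotone := h.monotone
  lipschitzWith := h.lipschitzWith

theorem comp_affine (h : HasMonotoneLipschitzDeriv K f f') (a b : ℝ) :
    HasMonotoneLipschitzDeriv (‖a‖₊ ^ 2 * K) (fun x => f (a * x + b))
      (fun x => a * f' (a * x + b)) where
  hasDerivAt x := by
    have hlin : HasDerivAt (fun x => a * x + b) a x := by
      simpa using ((hasDerivAt_id x).const_mul a).add_const b
    exact ((h.hasDerivAt (a * x + b)).comp x hlin).congr_deriv (mul_comm _ _)
  monotone := by
    rcases le_total 0 a with ha | ha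
    · exact (h.monotone.comp fun _ _ hxy => by gcongr).const_mul ha
    · exact (h.monotone.comp_antitone fun _ _ hxy => by nlinarith).const_mul_of_nonpos ha
  lipschitzWith := by
    refine LipschitzWith.of_dist_le_mul fun x y => ?_
    have hf' := h.lipschitzWith.dist_le_mul (a * x + b) (a * y + b)
    rw [Real.dist_eq, ← mul_sub, abs_mul]
    rw [Real.dist_eq, Real.dist_eq, show a * x + b - (a * y + b) = a * (x - y) by ring,
      abs_mul] at hf'
    calc |a| * |f' (a * x + b) - f' (a * y + b)| ≤ |a| * (K * (|a| * |x - y|)) := by gcongr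
      _ = _ := by push_cast; rw [Real.norm_eq_abs, Real.dist_eq]; ring

theorem half_sq : HasMonotoneLipschitzDeriv 1 (fun x => x ^ 2 / 2) id where
  hasDerivAt x := by simpa using (hasDerivAt_pow 2 x).div_const 2
  monotone := monotone_id
  lipschitzWith := LipschitzWith.id

theorem half_max_zero_sq :
    HasMonotoneLipschitzDeriv 1 (fun x => max x 0 ^ 2 / 2) (max · 0) where
  hasDerivAt x := by
    -- the first-order remainder at `x` is at most `(y - x)² / 2`
    refine .of_isLittleO <| Asymptotics.IsBigO.trans_isLittleO ?_
      (Asymptotics.isLittleO_pow_sub_sub x one_lt_two)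
    refine .of_bound (1 / 2) (Filter.Eventually.of_forall fun y => ?_)
    simp only [Real.norm_eq_abs, smul_eq_mul, sq_abs, abs_pow]
    rw [abs_le]
    rcases le_total x 0 with hx | hx <;> rcases le_total y 0 with hy | hy <;>
      simp only [max_eq_left, max_eq_right, hx, hy] <;> constructor <;> nlinarith
  monotone _ _ hxy := max_le_max hxy le_rfl
  lipschitzWith := LipschitzWith.id.max_const 0

theorem convexOn_univ (h : HasMonotoneLipschitzDeriv K f f') : ConvexOn ℝ Set.univ f := by
  refine Monotone.convexOn_univ_of_deriv (fun x => (h.hasDerivAt x).differentiableAt) ?_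
  simpa only [funext fun x => (h.hasDerivAt x).deriv] using h.monotone

end HasMonotoneLipschitzDeriv

theorem image_le_add_deriv_mul_add_sq {K : ℝ≥0} {f f' : ℝ → ℝ}
    (hf : ∀ x, HasDerivAt f (f' x) x) (hf' : LipschitzWith K f') (x y : ℝ) :
    f y ≤ f x + f' x * (y - x) + K / 2 * (y - x) ^ 2 := by
  set φ : ℝ → ℝ := fun s => f x + f' x * (s - x) + K / 2 * (s - x) ^ 2 - f s
  have hφ : ∀ s, HasDerivAt φ (f' x + K * (s - x) - f' s) s := fun s => by
    have := ((((hasDerivAt_id' s).sub_const x).const_mul (f' x)).const_add (f x)).fun_add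
      ((((hasDerivAt_id' s).sub_const x).fun_pow 2).const_mul ((K : ℝ) / 2)) |>.fun_sub (hf s)
    exact this.congr_deriv (by norm_num; ring)
  have hlip : ∀ s, |f' s - f' x| ≤ K * |s - x| := fun s => by
    simpa only [Real.dist_eq] using hf'.dist_le_mul s x
  -- `φ x = 0`, and by the Lipschitz bound `φ'` has the sign of `s - x`
  suffices 0 ≤ φ y by simpa [φ] using this
  rcases le_total x y with hxy | hyx
  · refine le_of_eq_of_le (by simp [φ]) <| monotoneOn_of_hasDerivWithinAt_nonneg (convex_Ici x)
      (fun s _ => (hφ s).continuousAt.continuousWithinAt)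
      (fun s _ => (hφ s).hasDerivWithinAt) (fun s hs => ?_) Set.self_mem_Ici hxy hxy
    rw [interior_Ici] at hs
    have := (le_abs_self _).trans (hlip s)
    rw [abs_of_pos (sub_pos.2 hs)] at this
    linarith
  · refine le_of_eq_of_le (by simp [φ]) <| antitoneOn_of_hasDerivWithinAt_nonpos (convex_Iic x)
      (fun s _ => (hφ s).continuousAt.continuousWithinAt)
      (fun s _ => (hφ s).hasDerivWithinAt) (fun s hs => ?_) hyx Set.self_mem_Iic hyx
    rw [interior_Iic] at hs
    have := (neg_abs_le _).trans' (neg_le_neg (hlip s))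
    rw [abs_of_neg (sub_neg.2 hs)] at this
    linarith

section SingleEntryPerturbation

variable {ι κ ν R : Type*} [DecidableEq ι] [DecidableEq κ] [CommRing R]
  (L : ι → κ → R) (i : ι) (k : κ) (t : R)

theorem sum_add_smul_single_mul [Fintype κ] (B : κ → ν → R) (i' : ι) (j : ν) :
    ∑ k', (L + t • fun i' k' => if i' = i ∧ k' = k then (1 : R) else 0) i' k' * B k' j
      = (if i' = i then B k j else 0) * t + ∑ k', L i' k' * B k' j := by
  simp only [Pi.add_apply, Pi.smul_apply, smul_eq_mul, add_mul, Finset.sum_add_distrib]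
  by_cases h : i' = i <;> simp [h, add_comm, mul_comm]

theorem sum_sq_add_smul_single [Fintype ι] [Fintype κ] :
    ∑ i', ∑ k', (L + t • fun i' k' => if i' = i ∧ k' = k then (1 : R) else 0) i' k' ^ 2
      = ∑ i', ∑ k', L i' k' ^ 2 + ((L i k + t) ^ 2 - L i k ^ 2) := by
  have hentry : ∀ i' k',
      (L + t • fun i' k' => if i' = i ∧ k' = k then (1 : R) else 0) i' k' ^ 2
      = L i' k' ^ 2 + if i' = i ∧ k' = k then (L i k + t) ^ 2 - L i k ^ 2 else 0 := by
    intro i' k'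
    by_cases hik : i' = i ∧ k' = k
    · obtain ⟨rfl, rfl⟩ := hik; simp
    · simp [hik]
  rw [Finset.sum_congr rfl fun i' _ => Finset.sum_congr rfl fun k' _ => hentry i' k']
  simp [Finset.sum_add_distrib, ite_and]

end SingleEntryPerturbation

theorem hasMonotoneLipschitzDeriv_macoF_add_smul_single {m n r : ℕ}
    (E Lb Ub : Finset (Fin m × Fin n)) (XE XL XU : Fin m × Fin n → ℝ)
    {μ : ℝ} (hμ : 0 ≤ μ) (L : Fin m → Fin r → ℝ) (B : Fin r → Fin n → ℝ)
    (i : Fin m) (k : Fin r) :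
    ∃ g', HasMonotoneLipschitzDeriv
      (μ + (∑ p ∈ E.filter (fun p => p.1 = i), (B k p.2) ^ 2)
        + (∑ p ∈ Lb.filter (fun p => p.1 = i), (B k p.2) ^ 2)
        + (∑ p ∈ Ub.filter (fun p => p.1 = i), (B k p.2) ^ 2)).toNNReal
      (fun t : ℝ => macoF m n r E Lb Ub XE XL XU μ
        (L + t • fun i' k' => if i' = i ∧ k' = k then (1 : ℝ) else 0) B) g' := by
  simp only [macoF, sum_add_smul_single_mul, sum_sq_add_smul_single]
  set a : Fin m × Fin n → ℝ := fun p => if p.1 = i then B k p.2 else 0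
  set c : Fin m × Fin n → ℝ := fun p => ∑ k', L p.1 k' * B k' p.2
  open HasMonotoneLipschitzDeriv in
  have key := ((((sum E fun p _ => half_sq.comp_affine (a p) (c p - XE p)).add
    (sum Lb fun p _ => half_max_zero_sq.comp_affine (-a p) (XL p - c p))).add
    (sum Ub fun p _ => half_max_zero_sq.comp_affine (a p) (c p - XU p))).add
    ((half_sq.comp_affine 1 (L i k)).const_mul μ.toNNReal)).add_const
    (μ / 2 * (∑ i', ∑ k', L i' k' ^ 2 - L i k ^ 2) + μ / 2 * ∑ k', ∑ j, B k' j ^ 2)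
  refine ⟨?_, ?_⟩
  swap
  convert key using 1
  · rw [← NNReal.coe_inj, Real.coe_toNNReal _ (by positivity)]
    push_cast
    simp only [a, Finset.sum_filter, Real.norm_eq_abs, sq_abs, ite_pow, ne_eq,
      OfNat.ofNat_ne_zero, not_false_eq_true, zero_pow, mul_one, norm_neg,
      Real.coe_toNNReal _ hμ, norm_one, one_pow]
    ring
  · funext t
    have hE : ∑ p ∈ E, (a p * t + c p - XE p) ^ 2 = ∑ p ∈ E, (a p * t + (c p - XE p)) ^ 2 :=
      Finset.sum_congr rfl fun _ _ => by ring_nf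
    have hLb : ∑ p ∈ Lb, max (XL p - (a p * t + c p)) 0 ^ 2
        = ∑ p ∈ Lb, max (-a p * t + (XL p - c p)) 0 ^ 2 :=
      Finset.sum_congr rfl fun _ _ => by ring_nf
    have hUb : ∑ p ∈ Ub, max (a p * t + c p - XU p) 0 ^ 2
        = ∑ p ∈ Ub, max (a p * t + (c p - XU p)) 0 ^ 2 :=
      Finset.sum_congr rfl fun _ _ => by ring_nf
    simp only [Real.coe_toNNReal _ hμ, ← Finset.sum_div]
    linear_combination hE / 2 + hLb / 2 + hUb / 2

theorem image_sub_deriv_div_le {K : ℝ≥0} (hK : 0 < K) {f f' : ℝ → ℝ}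
    (hf : ∀ x, HasDerivAt f (f' x) x) (hf' : LipschitzWith K f') (x : ℝ) :
    f (x - f' x / K) ≤ f x - f' x ^ 2 / (2 * K) := by
  have hK' : (K : ℝ) ≠ 0 := by positivity
  convert image_le_add_deriv_mul_add_sq hf hf' x (x - f' x / K) using 1
  field_simp
  ring

theorem macoF_coordinate_update_decrease_general
    (m n r : ℕ)
    (E Lb Ub : Finset (Fin m × Fin n)) (XE XL XU : Fin m × Fin n → ℝ)
    (μ : ℝ) (hμ : 0 ≤ μ)
    (L : Fin m → Fin r → ℝ) (B : Fin r → Fin n → ℝ) (i : Fin m) (k : Fin r)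
    (W : ℝ)
    (hW : W = μ + (∑ p ∈ E.filter (fun p => p.1 = i), (B k p.2) ^ 2)
        + (∑ p ∈ Lb.filter (fun p => p.1 = i), (B k p.2) ^ 2)
        + (∑ p ∈ Ub.filter (fun p => p.1 = i), (B k p.2) ^ 2))
    (hWpos : 0 < W)
    (g : ℝ → ℝ)
    (hg : g = fun t : ℝ => macoF m n r E Lb Ub XE XL XU μ
        (L + t • fun i' k' => if i' = i ∧ k' = k then (1 : ℝ) else 0) B) :
    ConvexOn ℝ Set.univ g ∧ Differentiable ℝ g ∧
    LipschitzWith W.toNNReal (deriv g) ∧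
    g (-(deriv g 0) / W) ≤ g 0 - (deriv g 0) ^ 2 / (2 * W) := by
  obtain ⟨g', hg'⟩ :=
    hasMonotoneLipschitzDeriv_macoF_add_smul_single E Lb Ub XE XL XU hμ L B i k
  rw [← hW, ← hg] at hg'
  have hderiv : deriv g = g' := funext fun t => (hg'.hasDerivAt t).deriv
  have hdecrease := image_sub_deriv_div_le (Real.toNNReal_pos.2 hWpos) hg'.hasDerivAt
    hg'.lipschitzWith 0
  rw [Real.coe_toNNReal W hWpos.le, zero_sub, ← neg_div] at hdecrease
  rw [hderiv]
  exact ⟨hg'.convexOn_univ, fun t => (hg'.hasDerivAt t).differentiableAt, hg'.lipschitzWith,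
    hdecrease⟩

/-- Monotonicity of the MACO coordinate update: along the `(i,k)` coordinate of `L`
the objective `g(t) = f(L + t·E_{ik}, R)` is convex and differentiable with
`W_{ik}`-Lipschitz derivative, and the update `δ = −g′(0)/W_{ik}` decreases the
objective by at least `g′(0)²/(2 W_{ik})`. -/
theorem macoF_coordinate_update_decrease
    (m n r : ℕ) (hm : 1 ≤ m) (hn : 1 ≤ n) (hr : 1 ≤ r)
    (E Lb Ub : Finset (Fin m × Fin n)) (XE XL XU : Fin m × Fin n → ℝ)
    (μ : ℝ) (hμ : 0 ≤ μ)
    (L : Fin m → Fin r → ℝ) (B : Fin r → Fin n → ℝ) (i : Fin m) (k : Fin r)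
    (W : ℝ)
    (hW : W = μ + (∑ p ∈ E.filter (fun p => p.1 = i), (B k p.2) ^ 2)
        + (∑ p ∈ Lb.filter (fun p => p.1 = i), (B k p.2) ^ 2)
        + (∑ p ∈ Ub.filter (fun p => p.1 = i), (B k p.2) ^ 2))
    (hWpos : 0 < W)
    (g : ℝ → ℝ)
    (hg : g = fun t : ℝ => macoF m n r E Lb Ub XE XL XU μ
        (L + t • fun i' k' => if i' = i ∧ k' = k then (1 : ℝ) else 0) B) :
    ConvexOn ℝ Set.univ g ∧ Differentiable ℝ g ∧
    LipschitzWith W.toNNReal (deriv g) ∧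
    g (-(deriv g 0) / W) ≤ g 0 - (deriv g 0) ^ 2 / (2 * W) :=
  macoF_coordinate_update_decrease_general m n r E Lb Ub XE XL XU μ hμ L B i k W hW hWpos g hg
end
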